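/- Let d ≥ 2 be an integer and consider the polynomial with rational coefficients Q(t) := (2t/d) · ∏_{j=1}^{d−1} ((t + j − d/2)/j)², which equals R(t − d/2) where R(k) := ((2k+d)/d) · ∏_{j=1}^{d−1} ((k+j)/j)² is the multiplicity polynomial of the k-th Laplace eigenvalue on the complex projective space ℂP^d. Then Q has degree 2d − 1 and the coefficient of t^{2d−2} in Q is zero. -/

import Mathlib

/-!
Pulling the constants out, `Q = c · t · P(t)²` with `c ≠ 0` and
`P = ∏_{j=1}^{d-1} (t + (j - d/2))` monic of degree `d - 1`. Hence `deg Q = 2d - 1`, and the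
coefficient of `t^{2d-2}` is `2c ∑_j (j - d/2)`, which vanishes because `j ↦ d - j` permutes
`{1, …, d-1}` and negates every `j - d/2`.
-/

open Polynomial

/-- Multiplicity polynomial of the `k`-th Laplace eigenvalue on the complex projective space
`ℂP^d`: `R(k) = ((2k+d)/d) ∏_{j=1}^{d-1} ((k+j)/j)²`. -/
noncomputable def cpR (d : ℕ) : Polynomial ℚ :=
  C (((d : ℚ))⁻¹) * (2 * X + C ((d : ℚ))) *
    ∏ j ∈ Finset.Icc 1 (d - 1), (C ((j : ℚ)⁻¹) * (X + C ((j : ℚ)))) ^ 2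

/-- The shifted multiplicity polynomial
`Q(t) = (2t/d) ∏_{j=1}^{d-1} ((t + j - d/2)/j)²` for `ℂP^d`. -/
noncomputable def cpQ (d : ℕ) : Polynomial ℚ :=
  C (2 * ((d : ℚ))⁻¹) * X *
    ∏ j ∈ Finset.Icc 1 (d - 1),
      (C ((j : ℚ)⁻¹) * (X + C ((j : ℚ) - (d : ℚ) / 2))) ^ 2

open Finset

theorem sum_Icc_sub_half_eq_zero {K : Type*} [Field K] [CharZero K] (n : ℕ) :
    ∑ j ∈ Icc 1 (n - 1), ((j : K) - n / 2) = 0 := by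
  have hreflect : ∑ j ∈ Icc 1 (n - 1), ((j : K) - n / 2) =
      ∑ j ∈ Icc 1 (n - 1), -((j : K) - n / 2) := by
    refine sum_nbij' (n - ·) (n - ·) ?_ ?_ ?_ ?_ fun j hj => ?_
    any_goals intro j hj; simp only [mem_Icc] at hj ⊢; omega
    rw [Nat.cast_sub ((mem_Icc.1 hj).2.trans (Nat.sub_le n 1))]
    ring
  rw [sum_neg_distrib] at hreflect
  exact self_eq_neg.mp hreflect

namespace Polynomial

variable {R ι : Type*} [CommRing R]

theorem monic_prod_X_add_C (s : Finset ι) (a : ι → R) : (∏ i ∈ s, (X + C (a i))).Monic :=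
  monic_prod_of_monic _ _ fun i _ => monic_X_add_C (a i)

theorem natDegree_prod_X_add_C [Nontrivial R] (s : Finset ι) (a : ι → R) :
    (∏ i ∈ s, (X + C (a i))).natDegree = #s := by
  rw [natDegree_prod_of_monic _ _ fun i _ => monic_X_add_C (a i)]
  simp only [natDegree_X_add_C, sum_const, smul_eq_mul, mul_one]

theorem nextCoeff_prod_X_add_C (s : Finset ι) (a : ι → R) :
    (∏ i ∈ s, (X + C (a i))).nextCoeff = ∑ i ∈ s, a i := by
  rw [Monic.nextCoeff_prod _ _ fun i _ => monic_X_add_C (a i)]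
  simp only [nextCoeff_X_add_C]

theorem nextCoeff_X_mul {p : R[X]} (hp : p.Monic) : (X * p).nextCoeff = p.nextCoeff := by
  have h := (monic_X_add_C (0 : R)).nextCoeff_mul hp
  rwa [nextCoeff_X_add_C, zero_add, map_zero, add_zero] at h

end Polynomial

theorem cpR_comp_X_sub_C (d : ℕ) : (cpR d).comp (X - C ((d : ℚ) / 2)) = cpQ d := by
  simp only [cpQ, cpR, mul_comp, Polynomial.prod_comp, pow_comp, add_comp, X_comp, C_comp,
    ofNat_comp, Nat.cast_ofNat]
  have hlinear : (2 * (X - C ((d : ℚ) / 2)) + C (d : ℚ)) = C 2 * X := by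
    have hC : C (d : ℚ) = C 2 * C ((d : ℚ) / 2) := by rw [← C_mul]; congr 1; ring
    linear_combination hC + (C ((d : ℚ) / 2) - X) * (map_ofNat C 2 : C (2 : ℚ) = 2)
  have hfactor : ∀ j : ℕ, X - C ((d : ℚ) / 2) + C (j : ℚ) = X + C ((j : ℚ) - d / 2) := by
    intro j; rw [map_sub]; ring
  simp only [hlinear, hfactor, map_mul]
  ring

theorem cpQ_eq_C_mul_X_mul_sq (d : ℕ) :
    cpQ d = C (2 * (d : ℚ)⁻¹ * ∏ j ∈ Icc 1 (d - 1), ((j : ℚ)⁻¹) ^ 2) *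
      (X * (∏ j ∈ Icc 1 (d - 1), (X + C ((j : ℚ) - d / 2))) ^ 2) := by
  simp only [cpQ, mul_pow, prod_mul_distrib, prod_pow, map_mul, map_prod, map_pow]
  ring

theorem natDegree_cpQ {d : ℕ} (hd : d ≠ 0) : (cpQ d).natDegree = 2 * d - 1 := by
  have hc : 2 * (d : ℚ)⁻¹ * ∏ j ∈ Icc 1 (d - 1), ((j : ℚ)⁻¹) ^ 2 ≠ 0 := by
    refine mul_ne_zero (by positivity) (prod_ne_zero_iff.2 fun j hj => ?_)
    have : (j : ℚ) ≠ 0 := by have := (mem_Icc.1 hj).1; positivity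
    positivity
  have hmonic := (monic_prod_X_add_C (Icc 1 (d - 1)) fun j => (j : ℚ) - d / 2).pow 2
  rw [cpQ_eq_C_mul_X_mul_sq, natDegree_C_mul hc, natDegree_X_mul hmonic.ne_zero,
    natDegree_pow, natDegree_prod_X_add_C, Nat.card_Icc]
  omega

theorem nextCoeff_cpQ (d : ℕ) : (cpQ d).nextCoeff = 0 := by
  have hmonic := monic_prod_X_add_C (Icc 1 (d - 1)) fun j => (j : ℚ) - d / 2
  rw [cpQ_eq_C_mul_X_mul_sq, nextCoeff_C_mul, nextCoeff_X_mul (hmonic.pow 2),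
    hmonic.nextCoeff_pow, nextCoeff_prod_X_add_C, sum_Icc_sub_half_eq_zero, smul_zero, mul_zero]

/-- For `d ≥ 2`, the polynomial `Q(t) = (2t/d) ∏_{j=1}^{d-1} ((t + j - d/2)/j)²` equals
`R(t - d/2)` where `R` is the multiplicity polynomial of `ℂP^d`; it has degree `2d - 1`
and its coefficient of `t^{2d-2}` is zero. -/
theorem cp_W_condition (d : ℕ) (hd : 2 ≤ d) :
    cpQ d = (cpR d).comp (X - C ((d : ℚ) / 2)) ∧
    (cpQ d).natDegree = 2 * d - 1 ∧
    (cpQ d).coeff (2 * d - 2) = 0 := by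
  have hdeg := natDegree_cpQ (d := d) (by omega)
  refine ⟨(cpR_comp_X_sub_C d).symm, hdeg, ?_⟩
  have hnext := nextCoeff_cpQ d
  rwa [nextCoeff_of_natDegree_pos (by omega), hdeg, show 2 * d - 1 - 1 = 2 * d - 2 by omega]
    at hnext
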